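/- arXiv:2503.00886 — 2 statements merged into one kernel-verified Lean document; each statement's English description precedes it below -/
import Mathlib

section
/- Let [a,b] be a segment with b > a and m a multisegment in good range for [a,b]. For all sufficiently large r ∈ ℤ_{>0}, the following are equivalent: (i) |I_{[a]}(m)| = |m|; (ii) D^{Lang,L}_{[a]}(𝔻_r(m)) ≠ ∞; (iii) D^{Lang,L}_{[a]}(𝔻_r^{[a,b]}(m)) ≠ ∞. -/
/-!
`Θ ∘ 𝔻_r` sends `[a', b']` to `[1 - a', r - 1 - b']`: it reverses lengths and exchanges the
starting points `a, a + 1` with `-a + 1, -a`. Once `r` exceeds every `b' + 1 - a`, it also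
reverses precedence between segments starting at `a` and `a + 1`, so the `tds(·, -a)`-process on
`Θ 𝔻_r(m)` is the image of the `tus(·, a)`-process on `m`. Both "the left derivative is finite"
and "the integral keeps the number of segments" then say that a segment starting at `a + 1`
survives that process. The extra segment `[b - r + 1, b]` of `𝔻_r^{[a,b]}(m)` becomes one starting
at `-b < -a`, which never takes part in the process.
-/

namespace Multiseg

/-- A segment `[a,b]` on a fixed cuspidal line, encoded by its endpoints. -/
abbrev Seg := ℤ × ℤ

/-- A multiset of pairs is a multisegment when each pair is a genuine segment. -/
def IsMS (m : Multiset Seg) : Prop := ∀ Δ ∈ m, Δ.1 ≤ Δ.2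

/-- `Δ ≺ Δ'` : the segment `Δ` precedes `Δ'`. -/
def Prec (Δ Δ' : Seg) : Prop := Δ.1 < Δ'.1 ∧ Δ.2 < Δ'.2 ∧ Δ'.1 ≤ Δ.2 + 1

instance : DecidableRel Prec := fun _ _ => by unfold Prec; infer_instance

/-- `Δ ⊆ Δ'` as segments. -/
def SSub (Δ Δ' : Seg) : Prop := Δ'.1 ≤ Δ.1 ∧ Δ.2 ≤ Δ'.2

/-- `m[i]`, the segments of `m` starting at `i`. -/
def startAt (m : Multiset Seg) (i : ℤ) : Multiset Seg := m.filter fun Δ => Δ.1 = i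

/-- `m⟨i⟩`, the segments of `m` ending at `i`. -/
def endAt (m : Multiset Seg) (i : ℤ) : Multiset Seg := m.filter fun Δ => Δ.2 = i

/-- `m_{[a,b]} = {[a',b'] ∈ m : a ≤ a' ≤ b+1 ≤ b'+1}`. -/
def mRange (m : Multiset Seg) (a b : ℤ) : Multiset Seg :=
  m.filter fun Δ => a ≤ Δ.1 ∧ Δ.1 ≤ b + 1 ∧ b ≤ Δ.2

/-- Add the segment `[x,y]` to `m`, discarding it if it is void. -/
def pushSeg (m : Multiset Seg) (x y : ℤ) : Multiset Seg :=
  if x ≤ y then m + {(x, y)} else m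

def msetMax (s : Multiset ℤ) : Option ℤ :=
  if h : s = 0 then none else some (s.toFinset.max' (Multiset.toFinset_nonempty.mpr h))

def msetMin (s : Multiset ℤ) : Option ℤ :=
  if h : s = 0 then none else some (s.toFinset.min' (Multiset.toFinset_nonempty.mpr h))

/-- The longest segment of `m[i]`, if any. -/
def longStart (m : Multiset Seg) (i : ℤ) : Option Seg :=
  (msetMax ((startAt m i).map Prod.snd)).map fun y => (i, y)

/-- The shortest segment of `m[i]`, if any. -/
def shortStart (m : Multiset Seg) (i : ℤ) : Option Seg :=
  (msetMin ((startAt m i).map Prod.snd)).map fun y => (i, y)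

/-- The longest segment of `m⟨i⟩`, if any. -/
def longEnd (m : Multiset Seg) (i : ℤ) : Option Seg :=
  (msetMin ((endAt m i).map Prod.fst)).map fun x => (x, i)

/-- The shortest segment of `m⟨i⟩`, if any. -/
def shortEnd (m : Multiset Seg) (i : ℤ) : Option Seg :=
  (msetMax ((endAt m i).map Prod.fst)).map fun x => (x, i)

/-- One removal step of the `tds(·,c)` process: remove the longest segment `Δ''`
of `m[c+1]` and the longest segment `Δ'` of `m[c]` with `Δ' ≺ Δ''`. -/
def tdsStep (m : Multiset Seg) (c : ℤ) : Option (Multiset Seg) :=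
  match longStart m (c + 1) with
  | none => none
  | some Δ'' =>
    match msetMax (((startAt m c).filter fun Δ => Prec Δ Δ'').map Prod.snd) with
    | none => none
    | some y => some ((m.erase (c, y)).erase Δ'')

def tdsIterF (c : ℤ) : ℕ → Multiset Seg → Multiset Seg
  | 0, m => m
  | n + 1, m =>
    match tdsStep m c with
    | none => m
    | some m' => tdsIterF c n m'

/-- Iterate the `tds(·,c)` process until it terminates. -/
def tdsIter (c : ℤ) (m : Multiset Seg) : Multiset Seg := tdsIterF c m.card m

/-- The `ρ`-derivative algorithm `𝒟_{[a]}`; the value `none` codes `∞`. -/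
def Drho (a : ℤ) (m : Multiset Seg) : Option (Multiset Seg) :=
  (shortStart (tdsIter a m) a).map fun Δ => pushSeg (m.erase Δ) (a + 1) Δ.2

/-- `ε_{[a]}(m)`, the number of segments starting at `a` left after the
`tds(·,a)` process terminates. -/
def epsA (a : ℤ) (m : Multiset Seg) : ℕ := (startAt (tdsIter a m) a).card

/-- The next element of an upward sequence after `p`. -/
def usNext (n : Multiset Seg) (p : Seg) : Option Seg :=
  match msetMin ((n.filter fun Δ => Prec p Δ).map Prod.fst) with
  | none => none
  | some aj =>
    (msetMax ((((n.filter fun Δ => Prec p Δ).filter fun Δ => Δ.1 = aj)).map Prod.snd)).map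
      fun y => (aj, y)

def usAux (n : Multiset Seg) : ℕ → Seg → List Seg
  | 0, _ => []
  | fuel + 1, p =>
    match usNext n p with
    | none => []
    | some Δ => Δ :: usAux n fuel Δ

/-- The upward sequence `Us(n)` of maximally linked segments of `n`. -/
def usList (n : Multiset Seg) : List Seg :=
  match msetMin (n.map Prod.fst) with
  | none => []
  | some a1 =>
    match longStart n a1 with
    | none => []
    | some Δ1 => Δ1 :: usAux n n.card Δ1

/-- The decomposition of a multisegment into successive upward sequences. -/
def usDecomp : ℕ → Multiset Seg → List (List Seg)
  | 0, _ => []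
  | fuel + 1, n =>
    if n = 0 then [] else usList n :: usDecomp fuel (n - (usList n : Multiset Seg))

/-- `[x,y] ⊆ [u,v]` (with the void interval contained in anything). -/
def intSubB (x y u v : ℤ) : Bool := decide (y < x) || (decide (u ≤ x) && decide (y ≤ v))

/-- Find, in a row of an upward-sequence decomposition, the first segment `Δ`
whose removable free section contains `[s(Δ), top]`. -/
def findRowD : List Seg → ℤ → Option Seg
  | [], _ => none
  | [Δ], top => if intSubB Δ.1 top Δ.1 Δ.2 then some Δ else none
  | Δ :: Δ' :: rest, top =>
    if intSubB Δ.1 top Δ.1 (Δ'.1 - 2) then some Δ else findRowD (Δ' :: rest) top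

/-- The selection step of the Langlands derivative algorithm, scanning the rows
downwards from the last one; it records each selected segment together with the
start of its truncation. -/
def selAuxD (rows : List (List Seg)) : ℕ → ℤ → List (Seg × ℤ)
  | 0, _ => []
  | n + 1, top =>
    match findRowD (rows.getD n []) top with
    | some Δ => (Δ, top + 1) :: selAuxD rows n (Δ.1 - 1)
    | none => selAuxD rows n top

/-- The Langlands derivative algorithm `𝒟^Lang_{[a,b]}`; `none` codes `∞`. -/
def DLang (a b : ℤ) (m : Multiset Seg) : Option (Multiset Seg) :=
  let m1 := mRange m a b
  let rows := usDecomp m1.card m1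
  let sel := selAuxD rows rows.length b
  match sel.getLast? with
  | none => none
  | some (Δl, _) =>
    if Δl.1 = a then
      some (sel.foldl (fun acc p => pushSeg (acc.erase p.1) p.2 p.1.2) m)
    else none

/-- One removal step of the `tus(·,c)` process. -/
def tusStep (n : Multiset Seg) (c : ℤ) : Option (Multiset Seg) :=
  match shortStart n c with
  | none => none
  | some Δ' =>
    match msetMin (((startAt n (c + 1)).filter fun Δ => Prec Δ' Δ).map Prod.snd) with
    | none => none
    | some y => some ((n.erase Δ').erase (c + 1, y))

def tusIterF (c : ℤ) : ℕ → Multiset Seg → Multiset Seg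
  | 0, n => n
  | k + 1, n =>
    match tusStep n c with
    | none => n
    | some n' => tusIterF c k n'

/-- Iterate the `tus(·,c)` process until it terminates. -/
def tusIter (c : ℤ) (n : Multiset Seg) : Multiset Seg := tusIterF c n.card n

/-- The `ρ`-integral algorithm `ℐ_{[a]}` (always defined). -/
def Irho (a : ℤ) (n : Multiset Seg) : Multiset Seg :=
  match longStart (tusIter a n) (a + 1) with
  | none => n + {(a, a)}
  | some Δ => pushSeg (n.erase Δ) a Δ.2

/-- The next element of a downward sequence after `p`. -/
def dsNext (n : Multiset Seg) (p : Seg) : Option Seg :=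
  match msetMax ((n.filter fun Δ => Prec Δ p).map Prod.fst) with
  | none => none
  | some aq => shortStart n aq

def dsAux (n : Multiset Seg) : ℕ → Seg → List Seg
  | 0, _ => []
  | k + 1, p =>
    match dsNext n p with
    | none => []
    | some Δ => Δ :: dsAux n k Δ

/-- The downward sequence `Ds(n)` of minimal linked segments with the largest
starting. -/
def dsList (n : Multiset Seg) : List Seg :=
  match msetMax (n.map Prod.fst) with
  | none => []
  | some a1 =>
    match shortStart n a1 with
    | none => []
    | some Δ1 => Δ1 :: dsAux n n.card Δ1

/-- The decomposition of a multisegment into successive downward sequences. -/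
def dsDecomp : ℕ → Multiset Seg → List (List Seg)
  | 0, _ => []
  | k + 1, n =>
    if n = 0 then [] else dsList n :: dsDecomp k (n - (dsList n : Multiset Seg))

/-- Find, in a row of a downward-sequence decomposition, the segment whose set
of addable free points contains `pt`. -/
def findRowI (a : ℤ) : List Seg → ℤ → Option Seg
  | [], _ => none
  | [Δ], pt => if decide (a ≤ pt) && decide (pt ≤ Δ.1 - 1) then some Δ else none
  | Δ :: Δ' :: rest, pt =>
    if decide (Δ'.1 + 1 ≤ pt) && decide (pt ≤ Δ.1 - 1) then some Δ
    else findRowI a (Δ' :: rest) pt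

/-- The selection step of the Langlands integral algorithm; it records each
selected segment together with the start of its extension. -/
def selAuxI (a : ℤ) (rows : List (List Seg)) : ℕ → ℤ → List (Seg × ℤ)
  | 0, _ => []
  | n + 1, pt =>
    match findRowI a (rows.getD n []) pt with
    | some Δ => (Δ, pt) :: selAuxI a rows n Δ.1
    | none => selAuxI a rows n pt

/-- The Langlands integral algorithm `ℐ^Lang_{[a,b]}`. -/
def ILang (a b : ℤ) (m : Multiset Seg) : Multiset Seg :=
  let m1 := mRange m a b
  let rows := dsDecomp m1.card m1
  let sel := selAuxI a rows rows.length a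
  let base := sel.foldl (fun acc p => pushSeg (acc.erase p.1) p.2 p.1.2) m
  match sel.getLast? with
  | none => pushSeg base a b
  | some (Δl, _) => pushSeg base Δl.1 b

/-- `m` is in good range for `[a,b]`. -/
def GoodRange (m : Multiset Seg) (a b : ℤ) : Prop := mRange m a b = m

/-- `Θ`, the Gelfand–Kazhdan involution on multisegments. -/
def Theta (m : Multiset Seg) : Multiset Seg := m.map fun Δ => (-Δ.2, -Δ.1)

/-- The exotic duality `𝔻_r`. -/
def Dual (r : ℤ) (m : Multiset Seg) : Multiset Seg :=
  m.map fun Δ => (-r + Δ.2 + 1, Δ.1 - 1)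

/-- `𝔻_r^{[a,b]}`. -/
def DualAB (r a b : ℤ) (m : Multiset Seg) : Multiset Seg := Dual r m + {(b - r + 1, b)}

/-- The left Langlands derivative algorithm `𝒟^{Lang,L}_{[a,b]}`. -/
def DLangL (a b : ℤ) (m : Multiset Seg) : Option (Multiset Seg) :=
  (DLang (-b) (-a) (Theta m)).map Theta

/-- The left `ρ`-derivative algorithm `𝒟^{Lang,L}_{[a]}`. -/
def DrhoL (a : ℤ) (m : Multiset Seg) : Option (Multiset Seg) :=
  (Drho (-a) (Theta m)).map Theta

/-- The next segment chosen by the MW algorithm after `p`. -/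
def mwNext (m : Multiset Seg) (p : Seg) : Option Seg :=
  (msetMax (((endAt m (p.2 - 1)).filter fun Δ => Prec Δ p).map Prod.fst)).map
    fun x => (x, p.2 - 1)

def mwAux (m : Multiset Seg) : ℕ → Seg → List Seg
  | 0, _ => []
  | k + 1, p =>
    match mwNext m p with
    | none => []
    | some Δ => Δ :: mwAux m k Δ

/-- The ordered segments participating in the MW algorithm for `m`. -/
def mwList (m : Multiset Seg) : List Seg :=
  match msetMax (m.map Prod.snd) with
  | none => []
  | some b0 =>
    match shortEnd m b0 with
    | none => []
    | some Δ0 => Δ0 :: mwAux m m.card Δ0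

/-- `𝒟^MW(m)`. -/
def DMW (m : Multiset Seg) : Multiset Seg :=
  (mwList m).foldl (fun acc Δ => pushSeg (acc.erase Δ) Δ.1 (Δ.2 - 1)) m

/-- The first segment `Δ(m)` produced by the MW algorithm for `m`. -/
def mwFirstSeg (m : Multiset Seg) : Option Seg :=
  match (mwList m).head?, (mwList m).getLast? with
  | some Δ0, some Δk => some (Δk.1, Δ0.2)
  | _, _ => none

/-- The total relative length of a multisegment. -/
def totalLen (m : Multiset Seg) : ℕ := (m.map fun Δ => (Δ.2 - Δ.1 + 1).toNat).sum

def sharpAux : ℕ → Multiset Seg → Multiset Seg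
  | 0, _ => 0
  | k + 1, m =>
    if m = 0 then 0
    else
      match mwFirstSeg m with
      | none => 0
      | some Δ => Δ ::ₘ sharpAux k (DMW m)

/-- The Mœglin–Waldspurger involution `m^#`. -/
def msharp (m : Multiset Seg) : Multiset Seg := sharpAux (totalLen m) m

/-- `ε^MW_{[a,c]}(m)`, the multiplicity of `[a,c]` in `m^#`. -/
def epsMW (a c : ℤ) (m : Multiset Seg) : ℕ := (msharp m).count (a, c)

/-- `m_i`: remove from `m` the participants of the first `i` runs of the MW
algorithm. -/
def mwStage (m : Multiset Seg) : ℕ → Multiset Seg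
  | 0 => m
  | i + 1 => mwStage m i - (mwList (DMW^[i] m) : Multiset Seg)

/-- `MW_k(m)`: all segments ending at `k` participating in the first `r` runs
of the MW algorithm. -/
def MWkSet (m : Multiset Seg) (r : ℕ) (k : ℤ) : Multiset Seg :=
  ∑ i ∈ Finset.range r, (mwList (DMW^[i] m) : Multiset Seg).filter fun Δ => Δ.2 = k

def upNbrAux (m : Multiset Seg) : ℕ → Seg → Option (List Seg)
  | 0, p => some [p]
  | k + 1, p =>
    match msetMin (((endAt m (p.2 + 1)).filter fun Δ => Prec p Δ).map Prod.fst) with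
    | none => none
    | some x => (upNbrAux m k (x, p.2 + 1)).map fun l => p :: l

/-- The removal upward sequence of maximal linked segments in neighbors on `m`
ranging from `a-1` to `b` (if it exists). -/
def upSeqNbr (m : Multiset Seg) (a b : ℤ) : Option (List Seg) :=
  match longEnd m (a - 1) with
  | none => none
  | some Δ => upNbrAux m (b - (a - 1)).toNat Δ

def zelRemF (a b : ℤ) : ℕ → Multiset Seg → Multiset Seg
  | 0, m => m
  | k + 1, m =>
    match upSeqNbr m a b with
    | none => m
    | some l => zelRemF a b k (m - (l : Multiset Seg))

/-- Repeatedly remove removal upward sequences of maximal linked segments in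
neighbors ranging from `a-1` to `b`, until none exists. -/
def zelRem (a b : ℤ) (m : Multiset Seg) : Multiset Seg := zelRemF a b m.card m

def zelRemCountF (a b : ℤ) : ℕ → Multiset Seg → ℕ
  | 0, _ => 0
  | k + 1, m =>
    match upSeqNbr m a b with
    | none => 0
    | some l => zelRemCountF a b k (m - (l : Multiset Seg)) + 1

/-- The number of removal upward sequences of maximal linked segments in
neighbors ranging from `a-1` to `b` successively removed from `m`. -/
def zelRemCount (a b : ℤ) (m : Multiset Seg) : ℕ := zelRemCountF a b m.card m

def downNbrAux (m : Multiset Seg) : ℕ → Seg → Option (List Seg)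
  | 0, p => some [p]
  | k + 1, p =>
    match msetMax (((endAt m (p.2 - 1)).filter fun Δ => Prec Δ p).map Prod.fst) with
    | none => none
    | some x => (downNbrAux m k (x, p.2 - 1)).map fun l => p :: l

/-- The Zelevinsky derivative algorithm `𝒟^Zel_{[a,b]}`; `none` codes `∞`. -/
def DZel (a b : ℤ) (m : Multiset Seg) : Option (Multiset Seg) :=
  match shortEnd (zelRem a b m) b with
  | none => none
  | some Δb =>
    match downNbrAux (zelRem a b m) (b - a).toNat Δb with
    | none => none
    | some l => some (l.foldl (fun acc Δ => pushSeg (acc.erase Δ) Δ.1 (Δ.2 - 1)) m)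

/-- The downward sequence of minimal linked segments in neighbors on `m`
ranging from `b` to `a-1` (if it exists). -/
def downSeqNbr (m : Multiset Seg) (a b : ℤ) : Option (List Seg) :=
  match shortEnd m b with
  | none => none
  | some Δ => downNbrAux m (b - (a - 1)).toNat Δ

def izRemF (a b : ℤ) : ℕ → Multiset Seg → Multiset Seg
  | 0, m => m
  | k + 1, m =>
    match downSeqNbr m a b with
    | none => m
    | some l => izRemF a b k (m - (l : Multiset Seg))

/-- Repeatedly remove downward sequences of minimal linked segments in
neighbors ranging from `b` to `a-1`, until none exists. -/
def izRem (a b : ℤ) (m : Multiset Seg) : Multiset Seg := izRemF a b m.card m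

def extNext (m : Multiset Seg) (p : Seg) : Option Seg :=
  (msetMin (((endAt m (p.2 + 1)).filter fun Δ => Prec p Δ).map Prod.fst)).map
    fun x => (x, p.2 + 1)

def extAux (m : Multiset Seg) : ℕ → Option Seg → List (Option Seg)
  | 0, _ => []
  | k + 1, p =>
    let cur := p.bind (extNext m)
    cur :: extAux m k cur

/-- The (possibly void) segments `Δ̃_{a-1}, …, Δ̃_{b-1}` participating in the
extension process of the Zelevinsky integral algorithm on `m`. -/
def extList (m : Multiset Seg) (a b : ℤ) : List (Option Seg) :=
  longEnd m (a - 1) :: extAux m (b - a).toNat (longEnd m (a - 1))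

def applyExt : Multiset Seg → ℤ → List (Option Seg) → Multiset Seg
  | acc, _, [] => acc
  | acc, i, some Δ :: rest => applyExt (pushSeg (acc.erase Δ) Δ.1 (Δ.2 + 1)) (i + 1) rest
  | acc, i, none :: rest => applyExt (acc + {(i + 1, i + 1)}) (i + 1) rest

/-- The Zelevinsky integral algorithm `ℐ^Zel_{[a,b]}`. -/
def IZel (a b : ℤ) (m : Multiset Seg) : Multiset Seg :=
  applyExt m (a - 1) (extList (izRem a b m) a b)

/-- `Δ̃⁺` for a possibly void `Δ̃` at position `i` (for the void segment at
position `i` this is the singleton `[i+1,i+1]`). -/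
def plusAt (i : ℤ) : Option Seg → Seg
  | some Δ => (Δ.1, Δ.2 + 1)
  | none => (i + 1, i + 1)

def plusList : ℤ → List (Option Seg) → List Seg
  | _, [] => []
  | i, o :: rest => plusAt i o :: plusList (i + 1) rest

/-- `n₁` and `n₂` are linked by mapping: there is an injective map `f : n₁ → n₂`
with `Δ ≺ f(Δ)` for all `Δ ∈ n₁`. -/
def LinkedByMapping (n₁ n₂ : Multiset Seg) : Prop :=
  ∃ n₂' ≤ n₂, Multiset.Rel Prec n₁ n₂'

def startsSorted (n : Multiset Seg) : List ℤ := (n.map Prod.fst).sort (· ≤ ·)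

/-- `n₁' < n₁` for multisegments of segments ending at a common point, compared
via their sorted lists of starting points. -/
def MSLtStarts (n₁' n₁ : Multiset Seg) : Prop :=
  startsSorted n₁' ≠ startsSorted n₁ ∧
    List.Forall₂ (· ≤ ·) (startsSorted n₁) (startsSorted n₁')

/-- `n₁ ⊆ m⟨k-1⟩` and `n₂ ⊆ m⟨k⟩` are minimally linked in `m`. -/
def MinLinked (m : Multiset Seg) (k : ℤ) (n₁ n₂ : Multiset Seg) : Prop :=
  n₁ ≤ endAt m (k - 1) ∧ n₂ ≤ endAt m k ∧ LinkedByMapping n₁ n₂ ∧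
    (∀ n₁' ≤ endAt m (k - 1), LinkedByMapping n₁' n₂ → n₁'.card ≤ n₁.card) ∧
    (∀ n₁' ≤ endAt m (k - 1), n₁'.card = n₁.card → MSLtStarts n₁' n₁ →
      ¬LinkedByMapping n₁' n₂)

/-- The non-free sections of a row of an upward-sequence decomposition. -/
def nfRow : List Seg → Multiset Seg
  | [] => 0
  | [_] => 0
  | Δ :: Δ' :: rest => pushSeg (nfRow (Δ' :: rest)) (Δ'.1 - 1) Δ.2

/-- `𝔡(m)`, the sum of all non-free sections. -/
def frakd (m : Multiset Seg) : Multiset Seg :=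
  (usDecomp m.card m).foldl (fun acc row => acc + nfRow row) 0

def DrhoPow (t : ℤ) : ℕ → Multiset Seg → Option (Multiset Seg)
  | 0, m => some m
  | k + 1, m => (Drho t m).bind (DrhoPow t k)

/-- `(𝒟_{[a+n-1]})^{ε_{a+n-1}} ∘ ⋯ ∘ (𝒟_{[a]})^{ε_a}(m)` where at each stage `t`
the exponent is `ε_t = ε_{[t]}` of the current multisegment; `none` codes that
some derivative in the composition is `∞`. -/
def hdComp : ℕ → ℤ → Multiset Seg → Option (Multiset Seg)
  | 0, _, m => some m
  | k + 1, t, m =>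
    match DrhoPow t (epsA t m) m with
    | none => none
    | some m' => hdComp k (t + 1) m'

lemma msetMax_eq_none {s : Multiset ℤ} : msetMax s = none ↔ s = 0 := by
  unfold msetMax; split <;> simp_all

lemma msetMin_eq_none {s : Multiset ℤ} : msetMin s = none ↔ s = 0 := by
  unfold msetMin; split <;> simp_all

lemma mem_of_msetMax_eq_some {s : Multiset ℤ} {y : ℤ} (h : msetMax s = some y) : y ∈ s := by
  unfold msetMax at h
  split at h
  · cases h
  · cases h
    exact Multiset.mem_toFinset.mp (Finset.max'_mem _ _)

lemma mem_of_msetMin_eq_some {s : Multiset ℤ} {y : ℤ} (h : msetMin s = some y) : y ∈ s := by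
  unfold msetMin at h
  split at h
  · cases h
  · cases h
    exact Multiset.mem_toFinset.mp (Finset.min'_mem _ _)

lemma msetMax_map_of_antitone {f : ℤ → ℤ} (hf : Antitone f) (s : Multiset ℤ) :
    msetMax (s.map f) = (msetMin s).map f := by
  unfold msetMax msetMin
  by_cases h : s = 0
  · simp [h]
  rw [dif_neg h, dif_neg (by simpa using h), Option.map_some]
  congr 1
  apply le_antisymm
  · apply Finset.max'_le
    simp only [Multiset.mem_toFinset, Multiset.mem_map]
    rintro _ ⟨x, hx, rfl⟩
    exact hf (Finset.min'_le _ _ (Multiset.mem_toFinset.mpr hx))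
  · exact Finset.le_max' _ _ (Multiset.mem_toFinset.mpr
      (Multiset.mem_map_of_mem f (Multiset.mem_toFinset.mp (Finset.min'_mem _ _))))

lemma longStart_eq_none {n : Multiset Seg} {i : ℤ} :
    longStart n i = none ↔ startAt n i = 0 := by
  rw [longStart, Option.map_eq_none_iff, msetMax_eq_none, Multiset.map_eq_zero]

lemma shortStart_eq_none {n : Multiset Seg} {i : ℤ} :
    shortStart n i = none ↔ startAt n i = 0 := by
  rw [shortStart, Option.map_eq_none_iff, msetMin_eq_none, Multiset.map_eq_zero]

lemma startAt_cons_of_ne {e : Seg} {i : ℤ} (h : e.1 ≠ i) (n : Multiset Seg) :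
    startAt (e ::ₘ n) i = startAt n i :=
  Multiset.filter_cons_of_neg _ h

lemma mem_startAt_of_longStart_eq_some {n : Multiset Seg} {i : ℤ} {Δ : Seg}
    (h : longStart n i = some Δ) : Δ ∈ startAt n i := by
  obtain ⟨y, hy, rfl⟩ := Option.map_eq_some_iff.mp h
  obtain ⟨Δ₀, hΔ₀, rfl⟩ := Multiset.mem_map.mp (mem_of_msetMax_eq_some hy)
  obtain ⟨-, rfl⟩ := Multiset.mem_filter.mp hΔ₀
  exact hΔ₀

lemma mem_startAt_of_shortStart_eq_some {n : Multiset Seg} {i : ℤ} {Δ : Seg}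
    (h : shortStart n i = some Δ) : Δ ∈ startAt n i := by
  obtain ⟨y, hy, rfl⟩ := Option.map_eq_some_iff.mp h
  obtain ⟨Δ₀, hΔ₀, rfl⟩ := Multiset.mem_map.mp (mem_of_msetMin_eq_some hy)
  obtain ⟨-, rfl⟩ := Multiset.mem_filter.mp hΔ₀
  exact hΔ₀

lemma tdsStep_zero (c : ℤ) : tdsStep 0 c = none := by
  rw [tdsStep, (longStart_eq_none (n := 0)).mpr rfl]

lemma card_lt_of_tdsStep_eq_some {c : ℤ} {n n' : Multiset Seg}
    (h : tdsStep n c = some n') : n'.card < n.card := by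
  unfold tdsStep at h
  split at h
  · cases h
  rename_i Δ'' _
  split at h
  · cases h
  rename_i y hy
  cases h
  obtain ⟨Δ₀, hΔ₀, rfl⟩ := Multiset.mem_map.mp (mem_of_msetMax_eq_some hy)
  obtain ⟨hmem, hΔ₀c⟩ := Multiset.mem_filter.mp (Multiset.mem_filter.mp hΔ₀).1
  have hmem' : (c, Δ₀.2) ∈ n := by rwa [← hΔ₀c]
  calc ((n.erase (c, Δ₀.2)).erase Δ'').card ≤ (n.erase (c, Δ₀.2)).card :=
        Multiset.card_erase_le
    _ < n.card := Multiset.card_erase_lt_of_mem hmem'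

lemma tdsIterF_succ_of_card_le (c : ℤ) :
    ∀ (k : ℕ) (n : Multiset Seg), n.card ≤ k → tdsIterF c (k + 1) n = tdsIterF c k n
  | 0, n, hn => by
    rw [Multiset.card_eq_zero.mp (Nat.le_zero.mp hn)]
    simp only [tdsIterF, tdsStep_zero]
  | k + 1, n, hn => by
    rw [tdsIterF, tdsIterF]
    cases hstep : tdsStep n c with
    | none => rfl
    | some n' =>
      exact tdsIterF_succ_of_card_le c k n'
        (by have := card_lt_of_tdsStep_eq_some hstep; omega)

lemma tdsStep_cons {c : ℤ} {e : Seg} (h₀ : e.1 ≠ c) (h₁ : e.1 ≠ c + 1) (n : Multiset Seg) :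
    tdsStep (e ::ₘ n) c = (tdsStep n c).map (e ::ₘ ·) := by
  unfold tdsStep longStart
  rw [startAt_cons_of_ne h₁, startAt_cons_of_ne h₀]
  cases msetMax ((startAt n (c + 1)).map Prod.snd) with
  | none => rfl
  | some y'' =>
    simp only [Option.map_some]
    cases msetMax (((startAt n c).filter fun Δ => Prec Δ (c + 1, y'')).map Prod.snd) with
    | none => rfl
    | some y =>
      simp only [Option.map_some]
      rw [Multiset.erase_cons_tail _ (fun h => h₀ (by rw [h])),
        Multiset.erase_cons_tail _ (fun h => h₁ (by rw [h]))]

lemma tdsIterF_cons {c : ℤ} {e : Seg} (h₀ : e.1 ≠ c) (h₁ : e.1 ≠ c + 1) :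
    ∀ (k : ℕ) (n : Multiset Seg), tdsIterF c k (e ::ₘ n) = e ::ₘ tdsIterF c k n
  | 0, _ => rfl
  | k + 1, n => by
    rw [tdsIterF, tdsIterF, tdsStep_cons h₀ h₁]
    cases tdsStep n c with
    | none => rfl
    | some n' => exact tdsIterF_cons h₀ h₁ k n'

lemma tdsIter_cons {c : ℤ} {e : Seg} (h₀ : e.1 ≠ c) (h₁ : e.1 ≠ c + 1) (n : Multiset Seg) :
    tdsIter c (e ::ₘ n) = e ::ₘ tdsIter c n := by
  rw [tdsIter, tdsIter, Multiset.card_cons, tdsIterF_cons h₀ h₁,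
    tdsIterF_succ_of_card_le c _ _ le_rfl]

lemma Drho_ne_none_iff {c : ℤ} {n : Multiset Seg} :
    Drho c n ≠ none ↔ startAt (tdsIter c n) c ≠ 0 := by
  rw [Drho, Ne, Option.map_eq_none_iff, shortStart_eq_none]

lemma Drho_cons_ne_none_iff {c : ℤ} {e : Seg} (h₀ : e.1 ≠ c) (h₁ : e.1 ≠ c + 1)
    (n : Multiset Seg) : Drho c (e ::ₘ n) ≠ none ↔ Drho c n ≠ none := by
  rw [Drho_ne_none_iff, Drho_ne_none_iff, tdsIter_cons h₀ h₁, startAt_cons_of_ne h₀]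

lemma le_of_tusStep_eq_some {a : ℤ} {n n' : Multiset Seg} (h : tusStep n a = some n') :
    n' ≤ n := by
  unfold tusStep at h
  split at h
  · cases h
  split at h
  · cases h
  cases h
  exact (Multiset.erase_le _ _).trans (Multiset.erase_le _ _)

lemma tusIterF_le (a : ℤ) : ∀ (k : ℕ) (n : Multiset Seg), tusIterF a k n ≤ n
  | 0, _ => le_rfl
  | k + 1, n => by
    rw [tusIterF]
    cases hstep : tusStep n a with
    | none => exact le_rfl
    | some n' => exact (tusIterF_le a k n').trans (le_of_tusStep_eq_some hstep)

lemma card_Irho_eq_iff {a : ℤ} {m : Multiset Seg} (ha : ∀ Δ ∈ m, a ≤ Δ.2) :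
    (Irho a m).card = m.card ↔ startAt (tusIter a m) (a + 1) ≠ 0 := by
  unfold Irho
  cases hl : longStart (tusIter a m) (a + 1) with
  | none => simp [longStart_eq_none.mp hl]
  | some Δ =>
    have hΔ := mem_startAt_of_longStart_eq_some hl
    have hmem : Δ ∈ m := Multiset.mem_of_le (tusIterF_le a _ m) (Multiset.mem_filter.mp hΔ).1
    simp only
    rw [pushSeg, if_pos (ha Δ hmem), Multiset.card_add, Multiset.card_singleton,
      Multiset.card_erase_add_one hmem]
    exact iff_of_true rfl fun h0 => by simp [h0] at hΔ

def thetaDualSeg (r : ℤ) (Δ : Seg) : Seg := (1 - Δ.1, r - Δ.2 - 1)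

lemma thetaDualSeg_injective (r : ℤ) : Function.Injective (thetaDualSeg r) := by
  intro Δ₁ Δ₂ h
  simp only [thetaDualSeg, Prod.mk.injEq] at h
  ext <;> omega

lemma Theta_Dual (r : ℤ) (m : Multiset Seg) : Theta (Dual r m) = m.map (thetaDualSeg r) := by
  rw [Theta, Dual, Multiset.map_map]
  refine Multiset.map_congr rfl fun Δ _ => ?_
  simp only [Function.comp_apply, thetaDualSeg, Prod.mk.injEq]
  constructor <;> ring

lemma startAt_map_thetaDualSeg (r : ℤ) (n : Multiset Seg) (i : ℤ) :
    startAt (n.map (thetaDualSeg r)) i = (startAt n (1 - i)).map (thetaDualSeg r) := by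
  rw [startAt, startAt, Multiset.filter_map]
  exact congrArg _ (Multiset.filter_congr fun Δ _ => by
    simp only [Function.comp_apply, thetaDualSeg]; omega)

lemma map_snd_map_thetaDualSeg (r : ℤ) (s : Multiset Seg) :
    (s.map (thetaDualSeg r)).map Prod.snd = (s.map Prod.snd).map fun x => r - x - 1 := by
  simp only [Multiset.map_map]
  rfl

lemma antitone_sub_sub_one (r : ℤ) : Antitone fun x : ℤ => r - x - 1 :=
  fun _ _ h => by dsimp only; omega

lemma longStart_map_thetaDualSeg (r : ℤ) (n : Multiset Seg) (i : ℤ) :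
    longStart (n.map (thetaDualSeg r)) i = (shortStart n (1 - i)).map (thetaDualSeg r) := by
  rw [longStart, shortStart, startAt_map_thetaDualSeg, map_snd_map_thetaDualSeg,
    msetMax_map_of_antitone (antitone_sub_sub_one r), Option.map_map, Option.map_map]
  congr 1
  funext y
  simp only [Function.comp_apply, thetaDualSeg, Prod.mk.injEq]
  exact ⟨by ring, trivial⟩

section DualProcess

variable {r a : ℤ} {n : Multiset Seg}

lemma tdsStep_map_thetaDualSeg (hr : ∀ Δ ∈ n, Δ.2 + 1 - a ≤ r) (ha : ∀ Δ ∈ n, a ≤ Δ.2) :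
    tdsStep (n.map (thetaDualSeg r)) (-a) = (tusStep n a).map (Multiset.map (thetaDualSeg r)) := by
  unfold tdsStep tusStep
  rw [longStart_map_thetaDualSeg, show (1 : ℤ) - (-a + 1) = a by ring]
  cases hs : shortStart n a with
  | none => rfl
  | some Δ' =>
    obtain ⟨hmem', hΔ'a⟩ := Multiset.mem_filter.mp (mem_startAt_of_shortStart_eq_some hs)
    have hΔ' := ha Δ' hmem'
    -- the adjacency condition `s(Δ'') ≤ e(Δ) + 1` on the dual side is where `r` must be large
    have hlinked : (((startAt (n.map (thetaDualSeg r)) (-a)).filter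
          fun Δ => Prec Δ (thetaDualSeg r Δ')).map Prod.snd)
        = (((startAt n (a + 1)).filter fun Δ => Prec Δ' Δ).map Prod.snd).map
          fun x => r - x - 1 := by
      rw [startAt_map_thetaDualSeg, show (1 : ℤ) - -a = a + 1 by ring, Multiset.filter_map,
        map_snd_map_thetaDualSeg]
      refine congrArg _ (congrArg _ (Multiset.filter_congr fun Δ hΔ => ?_))
      obtain ⟨hmem, hΔa⟩ := Multiset.mem_filter.mp hΔ
      have hrΔ := hr Δ hmem
      simp only [Function.comp_apply, Prec, thetaDualSeg]
      omega
    simp only [Option.map_some]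
    rw [hlinked, msetMax_map_of_antitone (antitone_sub_sub_one r)]
    cases msetMin (((startAt n (a + 1)).filter fun Δ => Prec Δ' Δ).map Prod.snd) with
    | none => rfl
    | some y =>
      have himage : thetaDualSeg r (a + 1, y) = (-a, r - y - 1) := by
        simp only [thetaDualSeg, Prod.mk.injEq]
        exact ⟨by ring, trivial⟩
      simp only [Option.map_some]
      rw [Multiset.map_erase _ (thetaDualSeg_injective r),
        Multiset.map_erase _ (thetaDualSeg_injective r), himage, Multiset.erase_comm]

lemma tdsIterF_map_thetaDualSeg (k : ℕ) (hr : ∀ Δ ∈ n, Δ.2 + 1 - a ≤ r)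
    (ha : ∀ Δ ∈ n, a ≤ Δ.2) :
    tdsIterF (-a) k (n.map (thetaDualSeg r)) = (tusIterF a k n).map (thetaDualSeg r) := by
  induction k generalizing n with
  | zero => rfl
  | succ k ih =>
    rw [tdsIterF, tusIterF, tdsStep_map_thetaDualSeg hr ha]
    cases hstep : tusStep n a with
    | none => rfl
    | some n' =>
      have hle := le_of_tusStep_eq_some hstep
      exact ih (fun Δ hΔ => hr Δ (Multiset.mem_of_le hle hΔ))
        (fun Δ hΔ => ha Δ (Multiset.mem_of_le hle hΔ))

lemma tdsIter_map_thetaDualSeg (hr : ∀ Δ ∈ n, Δ.2 + 1 - a ≤ r) (ha : ∀ Δ ∈ n, a ≤ Δ.2) :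
    tdsIter (-a) (n.map (thetaDualSeg r)) = (tusIter a n).map (thetaDualSeg r) := by
  rw [tdsIter, tusIter, Multiset.card_map, tdsIterF_map_thetaDualSeg _ hr ha]

lemma DrhoL_Dual_ne_none_iff (hr : ∀ Δ ∈ n, Δ.2 + 1 - a ≤ r) (ha : ∀ Δ ∈ n, a ≤ Δ.2) :
    DrhoL a (Dual r n) ≠ none ↔ startAt (tusIter a n) (a + 1) ≠ 0 := by
  rw [DrhoL, Ne, Option.map_eq_none_iff, Theta_Dual, ← Ne, Drho_ne_none_iff,
    tdsIter_map_thetaDualSeg hr ha, startAt_map_thetaDualSeg, show (1 : ℤ) - -a = a + 1 by ring,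
    Ne, Ne, Multiset.map_eq_zero]

end DualProcess

lemma DrhoL_DualAB_ne_none_iff {a b : ℤ} (hab : a < b) (r : ℤ) (m : Multiset Seg) :
    DrhoL a (DualAB r a b m) ≠ none ↔ DrhoL a (Dual r m) ≠ none := by
  have hTheta : Theta (DualAB r a b m) = (-b, -(b - r + 1)) ::ₘ Theta (Dual r m) := by
    rw [DualAB, Theta, Multiset.map_add, Multiset.map_singleton, add_comm,
      Multiset.singleton_add, Theta]
  rw [DrhoL, DrhoL, Ne, Ne, Option.map_eq_none_iff, Option.map_eq_none_iff, hTheta, ← Ne, ← Ne,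
    Drho_cons_ne_none_iff (by simp only; omega) (by simp only; omega)]

theorem stmt8_general (m : Multiset Seg) (a b : ℤ) (hab : a < b)
    (hgr : GoodRange m a b) :
    ∃ R : ℤ, 0 < R ∧ ∀ r : ℤ, R ≤ r →
      (((Irho a m).card = m.card ↔ DrhoL a (Dual r m) ≠ none) ∧
        (DrhoL a (Dual r m) ≠ none ↔ DrhoL a (DualAB r a b m) ≠ none)) := by
  have ha : ∀ Δ ∈ m, a ≤ Δ.2 := fun Δ hΔ => by
    have := Multiset.filter_eq_self.mp hgr Δ hΔ
    omega
  obtain ⟨M, hM⟩ := (m.map fun Δ => Δ.2 + 1 - a).toFinset.bddAbove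
  refine ⟨max 1 M, lt_max_of_lt_left one_pos, fun r hr => ?_⟩
  have hr : ∀ Δ ∈ m, Δ.2 + 1 - a ≤ r := fun Δ hΔ =>
    (hM (Multiset.mem_toFinset.mpr (Multiset.mem_map_of_mem _ hΔ))).trans
      ((le_max_right _ _).trans hr)
  exact ⟨(card_Irho_eq_iff ha).trans (DrhoL_Dual_ne_none_iff hr ha).symm,
    (DrhoL_DualAB_ne_none_iff hab r m).symm⟩

/-- for `b > a`, `m` in good range for `[a,b]` and all sufficiently
large `r > 0`: `|ℐ_{[a]}(m)| = |m|` iff `𝒟^{Lang,L}_{[a]}(𝔻_r(m)) ≠ ∞` iff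
`𝒟^{Lang,L}_{[a]}(𝔻_r^{[a,b]}(m)) ≠ ∞`. -/
theorem stmt8 (m : Multiset Seg) (hm : IsMS m) (a b : ℤ) (hab : a < b)
    (hgr : GoodRange m a b) :
    ∃ R : ℤ, 0 < R ∧ ∀ r : ℤ, R ≤ r →
      (((Irho a m).card = m.card ↔ DrhoL a (Dual r m) ≠ none) ∧
        (DrhoL a (Dual r m) ≠ none ↔ DrhoL a (DualAB r a b m) ≠ none)) :=
  stmt8_general m a b hab hgr

end Multiseg
end

section
/- Let m be a multisegment and [a,b] a segment; set m₁ = m_{[a,b]} and m_{p+1} = m_p − Ds(m_p). If Δ ∈ Ds(m_p) and Δ′ ∈ Ds(m_{p′}) with p < p′, then Δ′ is not properly contained in Δ. -/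
namespace Multiseg

/-! In `m_p` every start is at most every end plus one (they are `≤ b + 1` and `≥ b`), so in
such an `n` a segment that starts and ends strictly before `Δ_j ∈ Ds(n)` precedes `Δ_j`.
If `Δ' ∈ n` lies in `Δ_i ∈ Ds(n)`, walking down the sequence gives `s(Δ') ≤ s(Δ_j)` for every
`j ≤ i`: for `j = 1` by maximality of `a₁`; if `s(Δ') < s(Δ_j)` with `j < i`, then `Δ' ≺ Δ_j`,
so `s(Δ') ≤ a_{j+1}`; and `s(Δ') = s(Δ_j)` would give `e(Δ_j) ≤ e(Δ') ≤ e(Δ_i) < e(Δ_j)` by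
minimality of `Δ_j`. At `j = i` minimality forces `Δ' = Δ_i`. As `m_{p'} ⊆ m_p`, this applies
to `Δ' ∈ Ds(m_{p'})`. -/

lemma msetMax_eq_some {s : Multiset ℤ} {y : ℤ} (h : msetMax s = some y) :
    y ∈ s ∧ ∀ z ∈ s, z ≤ y := by
  unfold msetMax at h
  split at h
  · simp at h
  · cases h
    exact ⟨by simpa using Finset.max'_mem s.toFinset _,
      fun z hz => Finset.le_max' _ _ (Multiset.mem_toFinset.mpr hz)⟩

lemma msetMin_eq_some {s : Multiset ℤ} {y : ℤ} (h : msetMin s = some y) :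
    y ∈ s ∧ ∀ z ∈ s, y ≤ z := by
  unfold msetMin at h
  split at h
  · simp at h
  · cases h
    exact ⟨by simpa using Finset.min'_mem s.toFinset _,
      fun z hz => Finset.min'_le _ _ (Multiset.mem_toFinset.mpr hz)⟩

def IsShortest (n : Multiset Seg) (Δ : Seg) : Prop :=
  Δ ∈ n ∧ ∀ Φ ∈ n, Φ.1 = Δ.1 → Δ.2 ≤ Φ.2

/-- `Δ` may follow `p` in a downward sequence of `n`; `Δ ≺ p` need not hold, only some segment
of `n[s(Δ)]` precedes `p`. -/
def DsStep (n : Multiset Seg) (p Δ : Seg) : Prop :=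
  IsShortest n Δ ∧ Δ.1 < p.1 ∧ Δ.2 < p.2 ∧ ∀ Φ ∈ n, Prec Φ p → Φ.1 ≤ Δ.1

section

variable {n : Multiset Seg}

lemma shortStart_eq_some {i : ℤ} {Δ : Seg} (h : shortStart n i = some Δ) :
    Δ.1 = i ∧ IsShortest n Δ := by
  unfold shortStart at h
  obtain ⟨y, hy, rfl⟩ := Option.map_eq_some_iff.mp h
  obtain ⟨hmem, hmin⟩ := msetMin_eq_some hy
  obtain ⟨⟨x, y⟩, hΦ, rfl⟩ := Multiset.mem_map.mp hmem
  obtain ⟨hΦn, rfl : x = i⟩ := Multiset.mem_filter.mp hΦ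
  exact ⟨rfl, hΦn, fun Ψ hΨ hΨi =>
    hmin _ (Multiset.mem_map_of_mem _ (Multiset.mem_filter.mpr ⟨hΨ, hΨi⟩))⟩

lemma shortStart_ne_none {i : ℤ} {Φ : Seg} (hΦ : Φ ∈ n) (hi : Φ.1 = i) :
    shortStart n i ≠ none := by
  rw [shortStart, Ne, Option.map_eq_none_iff, msetMin_eq_none, ← Multiset.card_eq_zero,
    Multiset.card_map, Multiset.card_eq_zero, startAt, Multiset.filter_eq_nil]
  exact fun h => h Φ hΦ hi

lemma dsNext_eq_some {p Δ : Seg} (h : dsNext n p = some Δ) : DsStep n p Δ := by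
  unfold dsNext at h
  split at h
  · simp at h
  · rename_i aq haq
    obtain ⟨hmem, hmax⟩ := msetMax_eq_some haq
    obtain ⟨Ψ, hΨ, rfl⟩ := Multiset.mem_map.mp hmem
    obtain ⟨hΨn, hΨp⟩ := Multiset.mem_filter.mp hΨ
    obtain ⟨hΔΨ, hshort⟩ := shortStart_eq_some h
    refine ⟨hshort, hΔΨ ▸ hΨp.1, (hshort.2 Ψ hΨn hΔΨ.symm).trans_lt hΨp.2.1, ?_⟩
    exact fun Φ hΦ hΦp => hΔΨ ▸ hmax _ (Multiset.mem_map_of_mem _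
      (Multiset.mem_filter.mpr ⟨hΦ, hΦp⟩))

lemma isChain_dsAux (k : ℕ) (p : Seg) : List.IsChain (DsStep n) (p :: dsAux n k p) := by
  induction k generalizing p with
  | zero => exact .singleton p
  | succ k ih =>
    unfold dsAux
    split
    · exact .singleton p
    · rename_i Δ hΔ
      exact (ih Δ).cons_cons (dsNext_eq_some hΔ)

lemma dsList_eq_nil_or (n : Multiset Seg) :
    dsList n = [] ∨ ∃ Δ₁ rest, dsList n = Δ₁ :: rest ∧ IsShortest n Δ₁ ∧
      (∀ Φ ∈ n, Φ.1 ≤ Δ₁.1) ∧ List.IsChain (DsStep n) (Δ₁ :: rest) := by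
  unfold dsList
  split
  · exact .inl rfl
  · rename_i a₁ ha₁
    obtain ⟨hmem, hmax⟩ := msetMax_eq_some ha₁
    obtain ⟨Φ, hΦ, hΦa₁⟩ := Multiset.mem_map.mp hmem
    obtain ⟨Δ₁, hΔ₁⟩ := Option.ne_none_iff_exists'.mp (shortStart_ne_none hΦ hΦa₁)
    obtain ⟨rfl, hshort⟩ := shortStart_eq_some hΔ₁
    rw [hΔ₁]
    exact .inr ⟨_, _, rfl, hshort, fun Ψ hΨ => hmax _ (Multiset.mem_map_of_mem _ hΨ),
      isChain_dsAux _ _⟩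

lemma snd_le_of_isChain_dsStep {q : Seg} {l : List Seg}
    (hl : List.IsChain (DsStep n) (q :: l)) : ∀ Δ ∈ q :: l, Δ.2 ≤ q.2 :=
  hl.induction _ _ (fun _ _ hxy hx => hxy.2.2.1.le.trans hx) fun _ => le_rfl

lemma eq_of_ssub_of_isShortest {p Δ' : Seg} (hp : IsShortest n p) (hΔ' : Δ' ∈ n)
    (hstart : Δ'.1 ≤ p.1) (hsub : SSub Δ' p) : Δ' = p :=
  have hfst := le_antisymm hstart hsub.1
  Prod.ext hfst (le_antisymm hsub.2 (hp.2 Δ' hΔ' hfst))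

lemma eq_of_ssub_of_isChain_dsStep (hn : ∀ Φ ∈ n, ∀ Ψ ∈ n, Φ.1 ≤ Ψ.2 + 1) {p : Seg}
    {l : List Seg} (hp : IsShortest n p) (hl : List.IsChain (DsStep n) (p :: l))
    {Δ Δ' : Seg} (hΔ : Δ ∈ p :: l) (hΔ' : Δ' ∈ n) (hstart : Δ'.1 ≤ p.1) (hsub : SSub Δ' Δ) : Δ' = Δ := by
  induction l generalizing p with
  | nil =>
    obtain rfl := List.mem_singleton.mp hΔ
    exact eq_of_ssub_of_isShortest hp hΔ' hstart hsub
  | cons q rest ih =>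
    obtain ⟨hpq, hrest⟩ := List.isChain_cons_cons.mp hl
    rcases List.mem_cons.mp hΔ with rfl | hΔ
    · exact eq_of_ssub_of_isShortest hp hΔ' hstart hsub
    have hend : Δ'.2 < p.2 := hsub.2.trans_lt
      ((snd_le_of_isChain_dsStep hrest Δ hΔ).trans_lt hpq.2.2.1)
    rcases hstart.lt_or_eq with hlt | heq
    · have hprec : Prec Δ' p := ⟨hlt, hend, hn p hp.1 Δ' hΔ'⟩
      exact ih hpq.1 hrest hΔ (hpq.2.2.2 Δ' hΔ' hprec)
    · exact absurd (hp.2 Δ' hΔ' heq) hend.not_ge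

lemma mem_of_mem_dsList {Δ : Seg} (hΔ : Δ ∈ dsList n) : Δ ∈ n := by
  rcases dsList_eq_nil_or n with h | ⟨Δ₁, rest, h, hΔ₁, -, hl⟩
  · simp [h] at hΔ
  · rw [h] at hΔ
    exact (hl.induction (IsShortest n) _ (fun _ _ hxy _ => hxy.1) (fun _ => hΔ₁) Δ hΔ).1

lemma eq_of_ssub_of_mem_dsList (hn : ∀ Φ ∈ n, ∀ Ψ ∈ n, Φ.1 ≤ Ψ.2 + 1) {Δ Δ' : Seg}
    (hΔ : Δ ∈ dsList n) (hΔ' : Δ' ∈ n) (hsub : SSub Δ' Δ) : Δ' = Δ := by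
  rcases dsList_eq_nil_or n with h | ⟨Δ₁, rest, h, hΔ₁, hmax, hl⟩
  · simp [h] at hΔ
  · rw [h] at hΔ
    exact eq_of_ssub_of_isChain_dsStep hn hΔ₁ hl hΔ hΔ' (hmax Δ' hΔ') hsub

end

lemma fst_le_snd_add_one_of_mem_mRange {m : Multiset Seg} {a b : ℤ} {Φ Ψ : Seg}
    (hΦ : Φ ∈ mRange m a b) (hΨ : Ψ ∈ mRange m a b) : Φ.1 ≤ Ψ.2 + 1 := by
  have := (Multiset.mem_filter.mp hΦ).2
  have := (Multiset.mem_filter.mp hΨ).2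
  omega

def dsRest (n : Multiset Seg) : Multiset Seg := n - (dsList n : Multiset Seg)

lemma dsRest_le_id : dsRest ≤ id := fun _ => Multiset.sub_le_self _ _

lemma mem_dsList_of_mem_dsDecomp {k j : ℕ} {n : Multiset Seg} {Δ : Seg}
    (h : Δ ∈ (dsDecomp k n).getD j []) : Δ ∈ dsList (dsRest^[j] n) := by
  induction k generalizing n j with
  | zero => simp [dsDecomp] at h
  | succ k ih =>
    by_cases hn : n = 0
    · simp [dsDecomp, hn] at h
    rw [dsDecomp, if_neg hn] at h
    cases j with
    | zero => exact h
    | succ j =>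
      rw [List.getD_cons_succ] at h
      rw [Function.iterate_succ_apply]
      exact ih h

theorem stmt14_general (m : Multiset Seg) (a b : ℤ)
    (p p' : ℕ) (hpp : p < p')
    (Δ Δ' : Seg)
    (hΔ : Δ ∈ (dsDecomp (mRange m a b).card (mRange m a b)).getD p [])
    (hΔ' : Δ' ∈ (dsDecomp (mRange m a b).card (mRange m a b)).getD p' []) :
    ¬(SSub Δ' Δ ∧ Δ' ≠ Δ) := by
  rintro ⟨hsub, hne⟩
  set N := mRange m a b
  have hstage : dsRest^[p] N ≤ N := Function.iterate_le_id_of_le_id dsRest_le_id p N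
  have hN : ∀ Φ ∈ dsRest^[p] N, ∀ Ψ ∈ dsRest^[p] N, Φ.1 ≤ Ψ.2 + 1 := fun Φ hΦ Ψ hΨ =>
    fst_le_snd_add_one_of_mem_mRange (Multiset.mem_of_le hstage hΦ)
      (Multiset.mem_of_le hstage hΨ)
  have hΔ'p : Δ' ∈ dsRest^[p] N :=
    Multiset.mem_of_le (Function.antitone_iterate_of_le_id dsRest_le_id hpp.le N)
      (mem_of_mem_dsList (mem_dsList_of_mem_dsDecomp hΔ'))
  exact hne (eq_of_ssub_of_mem_dsList hN (mem_dsList_of_mem_dsDecomp hΔ) hΔ'p hsub)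

/-- in the decomposition of `m_{[a,b]}` into downward sequences,
a segment of a later row is never properly contained in a segment of an
earlier row. -/
theorem stmt14 (m : Multiset Seg) (hm : IsMS m) (a b : ℤ) (hab : a ≤ b)
    (p p' : ℕ) (hpp : p < p')
    (hlt : p' < (dsDecomp (mRange m a b).card (mRange m a b)).length)
    (Δ Δ' : Seg)
    (hΔ : Δ ∈ (dsDecomp (mRange m a b).card (mRange m a b)).getD p [])
    (hΔ' : Δ' ∈ (dsDecomp (mRange m a b).card (mRange m a b)).getD p' []) :
    ¬(SSub Δ' Δ ∧ Δ' ≠ Δ) :=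
  stmt14_general m a b p p' hpp Δ Δ' hΔ hΔ'

end Multiseg
end
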